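/- arXiv:1201.1178 — 2 statements merged into one kernel-verified Lean document; each statement's English description precedes it below -/
import Mathlib

section
/- For integer K ≥ 1 and λ, μ > 0, the map s(ρ) = (λ/μ)ρ + Σ_{k=1}^K k ν_ρ(k) satisfies s(1) = λ/μ + K/2. Consequently, the fleet size minimizing the limiting proportion of problematic stations ψ(s) = φ(s^{-1}(s)) is s = K/2 + λ/μ, at which ψ equals 2/(K+1). -/
/-!
Clearing the factor `1 - ρ`, `ν_ρ(k) = ρ^k / (1 + ρ + ⋯ + ρ^K)` for every `ρ`, so
`φ(ρ) = (1 + ρ^K) / (1 + ρ + ⋯ + ρ^K)`. Pairing `ρ^i` with `ρ^(K-i)` and using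
`(1 - ρ^i)(1 - ρ^(K-i)) ≥ 0` bounds the denominator by `(K+1)(1 + ρ^K)/2`, hence `φ ≥ 2/(K+1)`,
with equality at `ρ = 1`, where `ν_1` is uniform and `s(1) = λ/μ + (1 + ⋯ + K)/(K+1)`.
-/

/-- Stationary distribution ν_ρ of an M/M/1/K queue with load ρ (truncated geometric). -/
noncomputable def nu (K : ℕ) (ρ : ℝ) (k : ℕ) : ℝ :=
  if ρ = 1 then 1 / (K + 1) else ρ ^ k * (1 - ρ) / (1 - ρ ^ (K + 1))

/-- Proportion of problematic stations at fixed-point load ρ. -/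
noncomputable def phi (K : ℕ) (ρ : ℝ) : ℝ := nu K ρ 0 + nu K ρ K

/-- Fleet size as a function of the fixed-point load ρ. -/
noncomputable def S (K : ℕ) (lam mu : ℝ) (ρ : ℝ) : ℝ :=
  lam / mu * ρ + ∑ k ∈ Finset.Icc 1 K, (k : ℝ) * nu K ρ k

open Finset

section GeomSum

variable {R : Type*} [CommRing R] [LinearOrder R] [IsStrictOrderedRing R]

theorem pow_add_pow_le_one_add_pow_add {a : R} (ha : 0 ≤ a) (m n : ℕ) :
    a ^ m + a ^ n ≤ 1 + a ^ (m + n) := by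
  have hprod : 0 ≤ (1 - a ^ m) * (1 - a ^ n) := by
    rcases le_total a 1 with h | h
    · exact mul_nonneg (sub_nonneg.2 (pow_le_one₀ ha h)) (sub_nonneg.2 (pow_le_one₀ ha h))
    · exact mul_nonneg_of_nonpos_of_nonpos (sub_nonpos.2 (one_le_pow₀ h))
        (sub_nonpos.2 (one_le_pow₀ h))
  rw [pow_add]
  linarith

theorem two_mul_geom_sum_le {a : R} (ha : 0 ≤ a) (n : ℕ) :
    2 * ∑ i ∈ range (n + 1), a ^ i ≤ (n + 1) * (1 + a ^ n) := by
  have hreflect : ∑ i ∈ range (n + 1), a ^ (n - i) = ∑ i ∈ range (n + 1), a ^ i :=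
    sum_range_reflect (a ^ ·) (n + 1)
  calc 2 * ∑ i ∈ range (n + 1), a ^ i
      = ∑ i ∈ range (n + 1), (a ^ i + a ^ (n - i)) := by
        rw [sum_add_distrib, hreflect, two_mul]
    _ ≤ ∑ _i ∈ range (n + 1), (1 + a ^ n) := by
        refine sum_le_sum fun i hi => ?_
        have hin : i + (n - i) = n := Nat.add_sub_cancel' (Nat.lt_succ_iff.1 (mem_range.1 hi))
        simpa only [hin] using pow_add_pow_le_one_add_pow_add ha i (n - i)
    _ = (n + 1) * (1 + a ^ n) := by
        rw [sum_const, card_range, nsmul_eq_mul, Nat.cast_succ]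

end GeomSum

theorem sum_Icc_one_natCast (n : ℕ) : ∑ k ∈ Icc 1 n, (k : ℝ) = n * (n + 1) / 2 := by
  induction n with
  | zero => simp
  | succ n ih =>
    rw [sum_Icc_succ_top (by omega), ih]
    push_cast
    ring

theorem nu_eq_pow_div_geom_sum (K : ℕ) (ρ : ℝ) (k : ℕ) :
    nu K ρ k = ρ ^ k / ∑ i ∈ range (K + 1), ρ ^ i := by
  by_cases hρ : ρ = 1
  · simp [nu, hρ]
  · have hρ' : 1 - ρ ≠ 0 := sub_ne_zero.2 (Ne.symm hρ)
    rw [nu, if_neg hρ, ← mul_neg_geom_sum, mul_comm (1 - ρ), mul_div_mul_right _ _ hρ']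

theorem nu_one (K k : ℕ) : nu K 1 k = 1 / (K + 1) := by
  simp [nu]

theorem phi_eq_div_geom_sum (K : ℕ) (ρ : ℝ) :
    phi K ρ = (1 + ρ ^ K) / ∑ i ∈ range (K + 1), ρ ^ i := by
  rw [phi, nu_eq_pow_div_geom_sum, nu_eq_pow_div_geom_sum, pow_zero, add_div]

theorem phi_one (K : ℕ) : phi K 1 = 2 / (K + 1) := by
  rw [phi, nu_one, nu_one, ← add_div, one_add_one_eq_two]

theorem two_div_le_phi (K : ℕ) {ρ : ℝ} (hρ : 0 ≤ ρ) : 2 / (K + 1) ≤ phi K ρ := by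
  have hgeom : 0 < ∑ i ∈ range (K + 1), ρ ^ i :=
    sum_pos' (fun i _ => pow_nonneg hρ i) ⟨0, mem_range.2 K.succ_pos, by simp⟩
  rw [phi_eq_div_geom_sum, div_le_div_iff₀ (by positivity) hgeom, mul_comm _ (K + 1 : ℝ)]
  exact two_mul_geom_sum_le hρ K

theorem S_one (K : ℕ) (lam mu : ℝ) : S K lam mu 1 = K / 2 + lam / mu := by
  have hK : (K : ℝ) + 1 ≠ 0 := by positivity
  simp only [S, nu_one, mul_one, ← sum_mul, sum_Icc_one_natCast]
  field_simp
  ring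

theorem optimal_fleet_size_general (K : ℕ) (lam mu : ℝ) :
    S K lam mu 1 = K / 2 + lam / mu ∧
    phi K 1 = 2 / (K + 1) ∧
    ∀ ρ : ℝ, 0 < ρ → 2 / (K + 1) ≤ phi K ρ :=
  ⟨S_one K lam mu, phi_one K, fun _ hρ => two_div_le_phi K hρ.le⟩

/-- The optimal fleet size is s = K/2 + λ/μ, reached at ρ = 1, where the proportion of
problematic stations attains its minimal value 2/(K+1). -/
theorem optimal_fleet_size (K : ℕ) (hK : 1 ≤ K) (lam mu : ℝ)
    (hlam : 0 < lam) (hmu : 0 < mu) :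
    S K lam mu 1 = K / 2 + lam / mu ∧
    phi K 1 = 2 / (K + 1) ∧
    ∀ ρ : ℝ, 0 < ρ → 2 / (K + 1) ≤ phi K ρ :=
  optimal_fleet_size_general K lam mu
end

section
/- Under the two-choice rule with all users obeying, for station capacity K ≥ 1 and any fleet size s ∈ [K/2 + λ/μ, K − log₂K − 3 + λ/μ], the fixed-point load satisfies ρ ∈ [1 − 2^{−K/2}, 1], and hence the limiting proportion of problematic stations is at most 4√K · 2^{−K/2}. -/
/-!
Write `δ = 2 ^ (-K / 2)`, so that `2 ^ K * δ ^ 2 = 1`. Eliminating `u 1 = ρ (1 - u K ^ 2)` from the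
recursion gives `u (k + 1) = ρ (u k ^ 2 - u K ^ 2)`, so the occupancies decay doubly exponentially:
`u k ≤ ρ ^ (2 ^ k - 1)` and `u K ≤ u 1 ^ 2 ^ (K - 1)`.

If `ρ < 1 - δ`, pairing `k` with `K + 1 - k` and using `(1 - δ) ^ n ≤ (1 + n δ)⁻¹` gives
`u k + u (K + 1 - k) ≤ 1`, so the fleet `s` falls short of `K / 2 + λ / μ`. Once `ρ ≥ 1 - δ`, a
large `u K` would force `1 - u 1 ≥ ρ u K ^ 2 ≥ 2 K δ ^ 2`, whence
`u K ≤ (1 - (1 - u 1)) ^ 2 ^ (K - 1) ≤ exp (-K) ≤ δ`; so `u K ≤ 2 √K δ`, and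
`1 - u 1 = (1 - ρ) + ρ u K ^ 2` is then of order `δ` as well, because the upper bound on `s` gives
`K δ ≤ 1 / 8`.
-/

open Real Finset

theorem one_sub_pow_le_exp_neg_mul {t : ℝ} (ht : t ≤ 1) (n : ℕ) :
    (1 - t) ^ n ≤ exp (-(n * t)) := by
  calc (1 - t) ^ n ≤ exp (-t) ^ n := pow_le_pow_left₀ (by linarith) (one_sub_le_exp_neg t) n
    _ = exp (-(n * t)) := by rw [← exp_nat_mul]; ring_nf

theorem one_sub_pow_le_inv_one_add_mul {δ : ℝ} (h0 : 0 ≤ δ) (h1 : δ ≤ 1) (n : ℕ) :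
    (1 - δ) ^ n ≤ (1 + n * δ)⁻¹ := by
  calc (1 - δ) ^ n ≤ exp (-(n * δ)) := one_sub_pow_le_exp_neg_mul h1 n
    _ = (exp (n * δ))⁻¹ := exp_neg _
    _ ≤ (1 + n * δ)⁻¹ := inv_anti₀ (by positivity) (by linarith [add_one_le_exp (n * δ)])

theorem inv_one_add_add_inv_one_add_le_one {p q : ℝ} (hp : 0 ≤ p) (hq : 0 ≤ q) (h : 1 ≤ p * q) :
    (1 + p)⁻¹ + (1 + q)⁻¹ ≤ 1 := by
  rw [inv_add_inv (by positivity) (by positivity), div_le_one (by positivity)]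
  nlinarith

theorem one_sub_pow_add_one_sub_pow_le_one {δ : ℝ} (h0 : 0 ≤ δ) (h1 : δ ≤ 1) {m n : ℕ}
    (h : 1 ≤ m * n * δ ^ 2) : (1 - δ) ^ m + (1 - δ) ^ n ≤ 1 := by
  calc (1 - δ) ^ m + (1 - δ) ^ n ≤ (1 + m * δ)⁻¹ + (1 + n * δ)⁻¹ :=
        add_le_add (one_sub_pow_le_inv_one_add_mul h0 h1 m) (one_sub_pow_le_inv_one_add_mul h0 h1 n)
    _ ≤ 1 := inv_one_add_add_inv_one_add_le_one (by positivity) (by positivity) (by linarith)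

theorem one_sub_pow_le_self {δ : ℝ} (h0 : 0 < δ) (h1 : δ ≤ 1) {n : ℕ} (h : 1 ≤ δ + n * δ ^ 2) :
    (1 - δ) ^ n ≤ δ := by
  refine (one_sub_pow_le_inv_one_add_mul h0.le h1 n).trans ?_
  rw [inv_le_iff_one_le_mul₀ (by positivity)]
  linarith

theorem sum_Icc_le_half {f : ℕ → ℝ} {K : ℕ} (h : ∀ k ∈ Icc 1 K, f k + f (K + 1 - k) ≤ 1) :
    ∑ k ∈ Icc 1 K, f k ≤ K / 2 := by
  have hreflect : ∑ k ∈ Icc 1 K, f (K + 1 - k) = ∑ k ∈ Icc 1 K, f k :=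
    sum_nbij' (fun k ↦ K + 1 - k) (fun k ↦ K + 1 - k) (by simp; omega) (by simp; omega)
      (by simp; omega) (by simp; omega) (by simp)
  have hpairs : ∑ k ∈ Icc 1 K, (f k + f (K + 1 - k)) ≤ K := by
    simpa using sum_le_card_nsmul _ _ _ h
  rw [sum_add_distrib, hreflect] at hpairs
  linarith

theorem le_pow_two_pow_of_le_sq {v : ℕ → ℝ} {n : ℕ} (hv0 : ∀ k < n, 0 ≤ v k)
    (hv : ∀ k < n, v (k + 1) ≤ v k ^ 2) : ∀ k ≤ n, v k ≤ v 0 ^ 2 ^ k := by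
  intro k hk
  induction k with
  | zero => simp
  | succ k ih =>
    calc v (k + 1) ≤ v k ^ 2 := hv k hk
      _ ≤ (v 0 ^ 2 ^ k) ^ 2 := pow_le_pow_left₀ (hv0 k hk) (ih (by omega)) 2
      _ = v 0 ^ 2 ^ (k + 1) := by rw [← pow_mul, pow_succ]

section TwoPowSq

variable {K : ℕ} {δ : ℝ}

theorem le_one_of_two_pow_mul_sq_eq_one (hδ : 2 ^ K * δ ^ 2 = 1) : δ ≤ 1 := by
  nlinarith [one_le_pow₀ (M₀ := ℝ) (a := 2) one_le_two (n := K)]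

theorem one_sub_add_one_sub_pow_two_pow_le_one (hδ0 : 0 < δ) (hδ : 2 ^ K * δ ^ 2 = 1) :
    (1 - δ) + (1 - δ) ^ (2 ^ K - 1) ≤ 1 := by
  have hpow : (1 - δ) ^ (2 ^ K - 1) ≤ δ := by
    refine one_sub_pow_le_self hδ0 (le_one_of_two_pow_mul_sq_eq_one hδ) ?_
    rw [Nat.cast_sub Nat.one_le_two_pow]
    push_cast
    nlinarith [le_one_of_two_pow_mul_sq_eq_one hδ]
  linarith

theorem one_sub_pow_two_pow_add_le_one (hδ0 : 0 < δ) (hδ : 2 ^ K * δ ^ 2 = 1) {a b : ℕ}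
    (ha : 1 ≤ a) (hb : 1 ≤ b) (hab : a + b = K + 1) :
    (1 - δ) ^ (2 ^ a - 1) + (1 - δ) ^ (2 ^ b - 1) ≤ 1 := by
  obtain rfl | ha2 := ha.eq_or_lt
  · obtain rfl : b = K := by omega
    simpa using one_sub_add_one_sub_pow_two_pow_le_one hδ0 hδ
  obtain rfl | hb2 := hb.eq_or_lt
  · obtain rfl : a = K := by omega
    simpa [add_comm] using one_sub_add_one_sub_pow_two_pow_le_one hδ0 hδ
  have hhalf : ∀ c, c + 1 ≤ K → (2 : ℝ) ^ c * δ ^ 2 ≤ 1 / 2 := fun c hc ↦ by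
    have : (2 : ℝ) ^ (c + 1) ≤ 2 ^ K := pow_le_pow_right₀ one_le_two hc
    rw [pow_succ] at this
    nlinarith
  have hprod : (2 : ℝ) ^ a * 2 ^ b * δ ^ 2 = 2 := by
    rw [← pow_add, hab, pow_succ]; linear_combination 2 * hδ
  refine one_sub_pow_add_one_sub_pow_le_one hδ0.le (le_one_of_two_pow_mul_sq_eq_one hδ) ?_
  rw [Nat.cast_sub Nat.one_le_two_pow, Nat.cast_sub Nat.one_le_two_pow]
  push_cast
  nlinarith [hhalf a (by omega), hhalf b (by omega)]

end TwoPowSq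

theorem two_pow_mul_rpow_neg_half_sq (K : ℕ) :
    (2 : ℝ) ^ K * ((2 : ℝ) ^ (-(K : ℝ) / 2)) ^ 2 = 1 := by
  rw [← rpow_natCast, ← rpow_natCast (2 ^ _), ← rpow_mul zero_le_two, ← rpow_add two_pos]
  norm_num

theorem mul_rpow_neg_half_le_of_logb_le {x : ℝ} (hx : 0 < x) (h : logb 2 x ≤ x / 2 - 3) :
    x * (2 : ℝ) ^ (-x / 2) ≤ 1 / 8 := by
  rw [logb_le_iff_le_rpow one_lt_two hx] at h
  calc x * (2 : ℝ) ^ (-x / 2) ≤ 2 ^ (x / 2 - 3) * 2 ^ (-x / 2) := by gcongr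
    _ = 1 / 8 := by
      rw [← rpow_add two_pos, show x / 2 - 3 + -x / 2 = -3 by ring, rpow_neg zero_le_two]
      norm_num

theorem exp_neg_le_rpow_neg_half {x : ℝ} (hx : 0 ≤ x) : exp (-x) ≤ (2 : ℝ) ^ (-x / 2) := by
  rw [rpow_def_of_pos two_pos, exp_le_exp]
  nlinarith [log_le_sub_one_of_pos two_pos]

section TwoChoiceFixedPoint

variable {K : ℕ} {ρ : ℝ} {u : ℕ → ℝ}
  (hrec : ∀ k ≤ K, u (k + 1) = ρ * (u k ^ 2 - 1) + u 1) (hend : u (K + 1) = 0)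
include hrec hend

theorem u_one_eq : u 1 = ρ * (1 - u K ^ 2) := by
  linarith [hrec K le_rfl]

theorem u_succ_eq {k : ℕ} (hk : k ≤ K) : u (k + 1) = ρ * (u k ^ 2 - u K ^ 2) := by
  rw [hrec k hk, u_one_eq hrec hend]; ring

theorem mul_u_succ_le_sq {k : ℕ} (hk : k ≤ K) : ρ * u (k + 1) ≤ (ρ * u k) ^ 2 := by
  rw [u_succ_eq hrec hend hk]
  nlinarith [mul_nonneg (sq_nonneg ρ) (sq_nonneg (u K))]

theorem u_succ_le_sq (hρ0 : 0 ≤ ρ) (hρ1 : ρ ≤ 1) {k : ℕ} (hk : k ≤ K) : u (k + 1) ≤ u k ^ 2 := by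
  rw [u_succ_eq hrec hend hk]
  nlinarith [mul_nonneg hρ0 (sq_nonneg (u K)), mul_nonneg (sub_nonneg.2 hρ1) (sq_nonneg (u k))]

theorem u_le_pow (h0 : u 0 = 1) (hρ : 0 < ρ) (hnonneg : ∀ k ≤ K, 0 ≤ u k) :
    ∀ k ≤ K, u k ≤ ρ ^ (2 ^ k - 1) := by
  intro k hk
  have hmul := le_pow_two_pow_of_le_sq (v := fun k ↦ ρ * u k) (n := K)
    (fun k hk ↦ mul_nonneg hρ.le (hnonneg k hk.le))
    (fun k hk ↦ mul_u_succ_le_sq hrec hend hk.le) k hk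
  rw [h0, mul_one, ← Nat.sub_add_cancel (Nat.one_le_two_pow (n := k)), pow_succ'] at hmul
  exact le_of_mul_le_mul_left hmul hρ

theorem u_last_le_pow (hK : 1 ≤ K) (hρ0 : 0 ≤ ρ) (hρ1 : ρ ≤ 1) (hnonneg : ∀ k ≤ K, 0 ≤ u k) :
    u K ≤ u 1 ^ 2 ^ (K - 1) := by
  have := le_pow_two_pow_of_le_sq (v := fun i ↦ u (i + 1)) (n := K - 1)
    (fun i hi ↦ hnonneg _ (by omega)) (fun i hi ↦ u_succ_le_sq hrec hend hρ0 hρ1 (by omega))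
    (K - 1) le_rfl
  simpa [Nat.sub_add_cancel hK] using this

theorem sum_u_le_half (h0 : u 0 = 1) (hρ : 0 < ρ) (hnonneg : ∀ k ≤ K, 0 ≤ u k) {δ : ℝ}
    (hδ0 : 0 < δ) (hδ : 2 ^ K * δ ^ 2 = 1) (hρδ : ρ ≤ 1 - δ) :
    ∑ k ∈ Icc 1 K, u k ≤ K / 2 := by
  calc ∑ k ∈ Icc 1 K, u k ≤ ∑ k ∈ Icc 1 K, (1 - δ) ^ (2 ^ k - 1) := sum_le_sum fun k hk ↦
        (u_le_pow hrec hend h0 hρ hnonneg k (mem_Icc.1 hk).2).trans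
          (pow_le_pow_left₀ hρ.le hρδ _)
    _ ≤ K / 2 := sum_Icc_le_half fun k hk ↦ by
        rw [mem_Icc] at hk
        exact one_sub_pow_two_pow_add_le_one hδ0 hδ hk.1 (by omega) (by omega)

theorem u_last_le (hK : 1 ≤ K) (hρ1 : ρ ≤ 1) (hnonneg : ∀ k ≤ K, 0 ≤ u k)
    (hδ : (2 : ℝ) ^ (-(K : ℝ) / 2) ≤ 1 / 2) (hρδ : 1 - (2 : ℝ) ^ (-(K : ℝ) / 2) ≤ ρ) :
    u K ≤ 2 * √K * (2 : ℝ) ^ (-(K : ℝ) / 2) := by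
  set δ := (2 : ℝ) ^ (-(K : ℝ) / 2)
  have hδsq : 2 ^ K * δ ^ 2 = 1 := two_pow_mul_rpow_neg_half_sq K
  have hρ0 : 0 ≤ ρ := by linarith
  have hsqrt : 1 ≤ √(K : ℝ) := one_le_sqrt.2 (by exact_mod_cast hK)
  by_contra! hbig
  have hsq : 4 * K * δ ^ 2 ≤ u K ^ 2 := by
    have := pow_le_pow_left₀ (by positivity) hbig.le 2
    rw [mul_pow, mul_pow, sq_sqrt (Nat.cast_nonneg K)] at this
    linarith
  have hgap : K ≤ (2 ^ (K - 1) : ℕ) * (1 - u 1) := by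
    have h2 : (2 : ℝ) ^ (K - 1) * 2 = 2 ^ K := by rw [← pow_succ, Nat.sub_add_cancel hK]
    have ht : 2 * K * δ ^ 2 ≤ 1 - u 1 := by
      rw [u_one_eq hrec hend]
      nlinarith [mul_le_mul_of_nonneg_left hsq (by linarith : (0 : ℝ) ≤ 1 - δ),
        mul_nonneg (Nat.cast_nonneg K) (sq_nonneg δ)]
    push_cast
    nlinarith [mul_le_mul_of_nonneg_left ht (by positivity : (0 : ℝ) ≤ 2 ^ (K - 1))]
  have hexp : u K ≤ exp (-K) :=
    calc u K ≤ (1 - (1 - u 1)) ^ 2 ^ (K - 1) := by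
          simpa using u_last_le_pow hrec hend hK hρ0 hρ1 hnonneg
      _ ≤ exp (-((2 ^ (K - 1) : ℕ) * (1 - u 1))) :=
          one_sub_pow_le_exp_neg_mul (by linarith [hnonneg 1 hK]) _
      _ ≤ exp (-K) := exp_le_exp.2 (by linarith)
  have := exp_neg_le_rpow_neg_half (Nat.cast_nonneg K)
  nlinarith [rpow_pos_of_pos two_pos (-(K : ℝ) / 2)]

theorem one_sub_u_one_add_u_last_le (hK : 1 ≤ K) {δ : ℝ} (hKδ : K * δ ≤ 1 / 8) (hρ1 : ρ ≤ 1)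
    (hρδ : 1 - δ ≤ ρ) (hc0 : 0 ≤ u K) (hc : u K ≤ 2 * √K * δ) :
    (1 - u 1) + u K ≤ 4 * √K * δ := by
  have hsqrt : 1 ≤ √(K : ℝ) := one_le_sqrt.2 (by exact_mod_cast hK)
  have hδ0 : 0 ≤ δ := by nlinarith
  have hδ1 : δ ≤ 1 / 8 := by nlinarith [(Nat.one_le_cast (α := ℝ)).2 hK]
  have hsq : u K ^ 2 ≤ 4 * K * δ ^ 2 := by
    have := pow_le_pow_left₀ hc0 hc 2
    rw [mul_pow, mul_pow, sq_sqrt (Nat.cast_nonneg K)] at this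
    linarith
  rw [u_one_eq hrec hend]
  nlinarith [mul_le_mul_of_nonneg_left hsq (by linarith : 0 ≤ ρ)]

end TwoChoiceFixedPoint

/-- Theorem 2 of the paper: with all users obeying the two-choice rule, for any fleet size
s ∈ [K/2 + λ/μ, K - log₂ K - 3 + λ/μ] the fixed-point load satisfies ρ ∈ [1 - 2^{-K/2}, 1],
and the limiting proportion of problematic stations is at most 4 √K 2^{-K/2}. -/
theorem two_choice_main (K : ℕ) (hK : 1 ≤ K) (lam mu : ℝ)
    (hlam : 0 < lam) (hmu : 0 < mu)
    (ρ : ℝ) (hρ0 : 0 < ρ) (hρ1 : ρ ≤ 1)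
    (u : ℕ → ℝ) (h0 : u 0 = 1)
    (hrec : ∀ k ≤ K, u (k + 1) = ρ * ((u k) ^ 2 - 1) + u 1)
    (hend : u (K + 1) = 0)
    (hnonneg : ∀ k ≤ K, 0 ≤ u k)
    (s : ℝ) (hs : s = (∑ k ∈ Finset.Icc 1 K, u k) + ρ * lam / mu)
    (hsl : (K : ℝ) / 2 + lam / mu ≤ s)
    (hsu : s ≤ (K : ℝ) - Real.logb 2 K - 3 + lam / mu) :
    1 - (2 : ℝ) ^ (-(K : ℝ) / 2) ≤ ρ ∧
    (1 - u 1) + u K ≤ 4 * Real.sqrt K * (2 : ℝ) ^ (-(K : ℝ) / 2) := by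
  have hK0 : (1 : ℝ) ≤ K := by exact_mod_cast hK
  have hδ0 : 0 < (2 : ℝ) ^ (-(K : ℝ) / 2) := by positivity
  have hKδ : K * (2 : ℝ) ^ (-(K : ℝ) / 2) ≤ 1 / 8 :=
    mul_rpow_neg_half_le_of_logb_le (by positivity) (by linarith)
  have hδ : (2 : ℝ) ^ (-(K : ℝ) / 2) ≤ 1 / 2 := by nlinarith
  have hρδ : 1 - (2 : ℝ) ^ (-(K : ℝ) / 2) ≤ ρ := by
    by_contra! hlt
    have hsum := sum_u_le_half hrec hend h0 hρ0 hnonneg hδ0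
      (two_pow_mul_rpow_neg_half_sq K) hlt.le
    have hgain : 0 < (1 - ρ) * (lam / mu) := mul_pos (by linarith) (div_pos hlam hmu)
    rw [hs, mul_div_assoc] at hsl
    linarith
  exact ⟨hρδ, one_sub_u_one_add_u_last_le hrec hend hK hKδ hρ1 hρδ (hnonneg K le_rfl)
    (u_last_le hrec hend hK hρ1 hnonneg hδ hρδ)⟩
end
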